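/- For any (a,b) ∈ ℝⁿ×ℝⁿ the following are equivalent: (i) the point s := a² − b² is a stationary point of f, min{aᵢ², bᵢ²} = 0 for every i, and the submatrix ∇²h(s)_{II} is positive semidefinite, where I = {i : sᵢ ≠ 0} (equivalently, ⟨w, ∇²h(s)w⟩ ≥ 0 for every w ∈ ℝⁿ with wᵢ = 0 for all i ∉ I); (ii) (a,b) is a second-order stationary point of F, i.e., ∇F(a,b) = 0 and the Hessian ∇²F(a,b) is positive semidefinite. -/

import Mathlib

/-!
Along the line `t ↦ (a, b) + t • (u, v)` the objective is
`h (s + t • J(u, v) + t² • (u² - v²)) + μ * (quadratic in t)` with `J(u, v) = 2a⊙u - 2b⊙v`,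
so both derivatives of `F` come from those of `h` along a quadratic curve. With `g = ∇h(s)`:
`∇F(a, b) = 0` iff `aᵢ (gᵢ + μ) = 0 = bᵢ (μ - gᵢ)` for all `i`, and
`∇²F(a, b)[(u, v)] = ∇²h(s)[J(u, v)] + ∑ᵢ 2 (gᵢ + μ) uᵢ² + 2 (μ - gᵢ) vᵢ²`.
Since `μ ≠ 0`, the first-order conditions force `aᵢ = 0 ∨ bᵢ = 0`; coordinatewise they are then
equivalent to the sign conditions of stationarity together with `min (aᵢ², bᵢ²) = 0`.
For the second-order part, `J` maps onto the vectors supported on `I = {i | sᵢ ≠ 0}` through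
preimages on which the diagonal sum vanishes, and coordinate vectors at `i ∉ I` give `|gᵢ| ≤ μ`.
-/

section QuadraticCurve

variable {𝕜 E F : Type*} [NontriviallyNormedField 𝕜] [NormedAddCommGroup E] [NormedSpace 𝕜 E]
  [NormedAddCommGroup F] [NormedSpace 𝕜 F]

theorem hasDerivAt_quadraticCurve (x v d : E) (t : 𝕜) :
    HasDerivAt (fun t : 𝕜 => x + t • v + t ^ 2 • d) (v + (2 * t) • d) t := by
  simpa using (((hasDerivAt_id t).smul_const v).const_add x).fun_add
    ((hasDerivAt_pow 2 t).smul_const d)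

theorem contDiff_quadraticCurve (x v d : E) :
    ContDiff 𝕜 2 (fun t : 𝕜 => x + t • v + t ^ 2 • d) := by
  fun_prop

theorem iteratedDeriv_two_quadraticCurve (x v d : E) (t : 𝕜) :
    iteratedDeriv 2 (fun t : 𝕜 => x + t • v + t ^ 2 • d) t = (2 : 𝕜) • d := by
  have hderiv : deriv (fun t : 𝕜 => x + t • v + t ^ 2 • d) = fun t => v + (2 * t) • d :=
    funext fun t => (hasDerivAt_quadraticCurve x v d t).deriv
  have h2 : HasDerivAt (fun t : 𝕜 => v + (2 * t) • d) ((2 : 𝕜) • d) t := by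
    simpa using (((hasDerivAt_id t).const_mul (2 : 𝕜)).smul_const d).const_add v
  rw [iteratedDeriv_succ, iteratedDeriv_one, hderiv, h2.deriv]

variable {f : E → F} {x : E}

theorem DifferentiableAt.hasDerivAt_comp_quadraticCurve (hf : DifferentiableAt 𝕜 f x) (v d : E) :
    HasDerivAt (fun t : 𝕜 => f (x + t • v + t ^ 2 • d)) (fderiv 𝕜 f x v) 0 := by
  have hf' : HasFDerivAt f (fderiv 𝕜 f x) (x + (0 : 𝕜) • v + (0 : 𝕜) ^ 2 • d) := by
    simpa using hf.hasFDerivAt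
  simpa [Function.comp_def] using hf'.comp_hasDerivAt (0 : 𝕜) (hasDerivAt_quadraticCurve x v d 0)

theorem ContDiffAt.iteratedDeriv_two_comp_quadraticCurve (hf : ContDiffAt 𝕜 2 f x) (v d : E) :
    iteratedDeriv 2 (fun t : 𝕜 => f (x + t • v + t ^ 2 • d)) 0 =
      iteratedFDeriv 𝕜 2 f x (fun _ => v) + (2 : 𝕜) • fderiv 𝕜 f x d := by
  have hf' : ContDiffAt 𝕜 2 f (x + (0 : 𝕜) • v + (0 : 𝕜) ^ 2 • d) := by simpa using hf
  have := iteratedDeriv_vcomp_two hf' (contDiff_quadraticCurve x v d).contDiffAt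
  rw [Function.comp_def] at this
  rw [this, (hasDerivAt_quadraticCurve x v d 0).deriv, iteratedDeriv_two_quadraticCurve]
  simp

theorem ContDiffAt.iteratedFDeriv_two_apply_eq_iteratedDeriv_line (hf : ContDiffAt 𝕜 2 f x)
    (v : E) :
    iteratedFDeriv 𝕜 2 f x (fun _ => v) = iteratedDeriv 2 (fun t : 𝕜 => f (x + t • v)) 0 := by
  simpa using (hf.iteratedDeriv_two_comp_quadraticCurve v 0).symm

end QuadraticCurve

theorem EuclideanSpace.fderiv_apply_eq_sum_gradient {ι : Type*} [Fintype ι]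
    (f : EuclideanSpace ℝ ι → ℝ) (x z : EuclideanSpace ℝ ι) :
    fderiv ℝ f x z = ∑ i, gradient f x i * z i := by
  rw [← inner_gradient_left, PiLp.inner_apply]
  simp [mul_comm]

namespace HDP

variable {ι : Type*}

def sqDiff (a b : EuclideanSpace ℝ ι) : EuclideanSpace ℝ ι :=
  WithLp.toLp 2 fun i => a i ^ 2 - b i ^ 2

def sqDiffDeriv (a b u v : EuclideanSpace ℝ ι) : EuclideanSpace ℝ ι :=
  WithLp.toLp 2 fun i => 2 * a i * u i - 2 * b i * v i

@[simp]
theorem sqDiff_apply (a b : EuclideanSpace ℝ ι) (i : ι) : sqDiff a b i = a i ^ 2 - b i ^ 2 :=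
  rfl

@[simp]
theorem sqDiffDeriv_apply (a b u v : EuclideanSpace ℝ ι) (i : ι) :
    sqDiffDeriv a b u v i = 2 * a i * u i - 2 * b i * v i :=
  rfl

theorem sqDiff_add_smul (a b u v : EuclideanSpace ℝ ι) (t : ℝ) :
    sqDiff (a + t • u) (b + t • v) = sqDiff a b + t • sqDiffDeriv a b u v + t ^ 2 • sqDiff u v := by
  ext i
  simp only [sqDiff_apply, sqDiffDeriv_apply, PiLp.add_apply, PiLp.smul_apply, smul_eq_mul]
  ring

section Coordinate

variable {a b g μ : ℝ}

theorem eq_zero_or_eq_zero_of_stationary (hμ : μ ≠ 0) (ha : a * (g + μ) = 0)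
    (hb : b * (μ - g) = 0) : a = 0 ∨ b = 0 := by
  by_contra! hab
  have h1 : g + μ = 0 := (mul_eq_zero.1 ha).resolve_left hab.1
  have h2 : μ - g = 0 := (mul_eq_zero.1 hb).resolve_left hab.2
  exact hμ (by linarith)

theorem eq_zero_and_eq_zero_of_stationary (hμ : μ ≠ 0) (ha : a * (g + μ) = 0)
    (hb : b * (μ - g) = 0) (hs : a ^ 2 - b ^ 2 = 0) : a = 0 ∧ b = 0 := by
  rcases eq_zero_or_eq_zero_of_stationary hμ ha hb with rfl | rfl
  · exact ⟨rfl, by simpa using hs⟩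
  · exact ⟨by simpa [sub_eq_zero] using hs, rfl⟩

theorem sign_condition_and_min_sq_eq_zero_iff (hμ : μ ≠ 0) :
    ((a ^ 2 - b ^ 2 ≠ 0 → g = -μ * Real.sign (a ^ 2 - b ^ 2)) ∧ min (a ^ 2) (b ^ 2) = 0) ↔
      a * (g + μ) = 0 ∧ b * (μ - g) = 0 := by
  constructor
  · rintro ⟨hsign, hmin⟩
    have hab : a = 0 ∨ b = 0 := by
      rcases min_eq_iff.1 hmin with ⟨h, -⟩ | ⟨h, -⟩
      exacts [.inl (pow_eq_zero_iff two_ne_zero |>.1 h), .inr (pow_eq_zero_iff two_ne_zero |>.1 h)]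
    rcases lt_trichotomy (a ^ 2 - b ^ 2) 0 with hs | hs | hs
    · have ha : a = 0 := hab.resolve_right (by rintro rfl; nlinarith [sq_nonneg a])
      have hg : g = μ := by simpa [Real.sign_of_neg hs] using hsign hs.ne
      simp [ha, hg]
    · obtain ⟨rfl, rfl⟩ : a = 0 ∧ b = 0 := by
        rcases hab with rfl | rfl <;> simp_all
      simp
    · have hb : b = 0 := hab.resolve_left (by rintro rfl; nlinarith [sq_nonneg b])
      have hg : g = -μ := by simpa [Real.sign_of_pos hs] using hsign hs.ne'
      simp [hb, hg]
  · rintro ⟨ha, hb⟩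
    have hab := eq_zero_or_eq_zero_of_stationary hμ ha hb
    refine ⟨fun hs => ?_, by rcases hab with rfl | rfl <;> simp [sq_nonneg]⟩
    rcases hs.lt_or_gt with hs | hs
    · have hb0 : b ≠ 0 := by rintro rfl; nlinarith [sq_nonneg a]
      rw [Real.sign_of_neg hs]
      linarith [(mul_eq_zero.1 hb).resolve_left hb0]
    · have ha0 : a ≠ 0 := by rintro rfl; nlinarith [sq_nonneg b]
      rw [Real.sign_of_pos hs]
      linarith [(mul_eq_zero.1 ha).resolve_left ha0]

theorem mem_Icc_of_stationary (hμ : 0 ≤ μ) (ha : a * (g + μ) = 0) (hb : b * (μ - g) = 0)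
    (hs : a ^ 2 - b ^ 2 ≠ 0) : g ∈ Set.Icc (-μ) μ := by
  rcases eq_or_ne a 0 with rfl | ha0
  · have hb0 : b ≠ 0 := by rintro rfl; simp at hs
    have hg : g = μ := by linarith [(mul_eq_zero.1 hb).resolve_left hb0]
    exact ⟨by linarith, hg.le⟩
  · have hg : g = -μ := by linarith [(mul_eq_zero.1 ha).resolve_left ha0]
    exact ⟨hg.ge, by linarith⟩

end Coordinate

variable [Fintype ι]

def objective (h : EuclideanSpace ℝ ι → ℝ) (μ : ℝ) (p : EuclideanSpace ℝ ι × EuclideanSpace ℝ ι) :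
    ℝ :=
  h (sqDiff p.1 p.2) + μ * ∑ i, (p.1 i ^ 2 + p.2 i ^ 2)

section Derivatives

variable {h : EuclideanSpace ℝ ι → ℝ} {μ : ℝ} {a b : EuclideanSpace ℝ ι}

theorem objective_add_smul (h : EuclideanSpace ℝ ι → ℝ) (μ : ℝ) (a b u v : EuclideanSpace ℝ ι)
    (t : ℝ) :
    objective h μ ((a, b) + t • (u, v)) =
      h (sqDiff a b + t • sqDiffDeriv a b u v + t ^ 2 • sqDiff u v) +
        μ * (∑ i, (a i ^ 2 + b i ^ 2) + t • ∑ i, 2 * (a i * u i + b i * v i) +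
          t ^ 2 • ∑ i, (u i ^ 2 + v i ^ 2)) := by
  simp only [objective, Prod.fst_add, Prod.snd_add, Prod.smul_fst, Prod.smul_snd, sqDiff_add_smul,
    smul_eq_mul, Finset.mul_sum, ← Finset.sum_add_distrib]
  congr 2
  ext i
  simp only [PiLp.add_apply, PiLp.smul_apply, smul_eq_mul]
  ring

theorem contDiffAt_objective (hh : ContDiffAt ℝ 2 h (sqDiff a b)) :
    ContDiffAt ℝ 2 (objective h μ) (a, b) := by
  have hsq : ContDiff ℝ 2 fun p : EuclideanSpace ℝ ι × EuclideanSpace ℝ ι => sqDiff p.1 p.2 := by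
    unfold sqDiff
    fun_prop
  exact (hh.comp (a, b) hsq.contDiffAt).add (by fun_prop)

theorem fderiv_objective_apply (hh : ContDiffAt ℝ 2 h (sqDiff a b)) (u v : EuclideanSpace ℝ ι) :
    fderiv ℝ (objective h μ) (a, b) (u, v) =
      ∑ i, (2 * a i * (gradient h (sqDiff a b) i + μ) * u i +
        2 * b i * (μ - gradient h (sqDiff a b) i) * v i) := by
  have hline := ((hh.differentiableAt two_ne_zero).hasDerivAt_comp_quadraticCurve
    (sqDiffDeriv a b u v) (sqDiff u v)).fun_add
    ((hasDerivAt_quadraticCurve (∑ i, (a i ^ 2 + b i ^ 2)) (∑ i, 2 * (a i * u i + b i * v i))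
      (∑ i, (u i ^ 2 + v i ^ 2)) (0 : ℝ)).const_mul μ)
  rw [← ((contDiffAt_objective hh).differentiableAt two_ne_zero).lineDeriv_eq_fderiv, lineDeriv]
  simp_rw [objective_add_smul]
  rw [hline.deriv, EuclideanSpace.fderiv_apply_eq_sum_gradient]
  simp only [sqDiffDeriv_apply, mul_zero, zero_smul, add_zero, Finset.mul_sum,
    ← Finset.sum_add_distrib]
  exact Finset.sum_congr rfl fun i _ => by ring

theorem fderiv_objective_eq_zero_iff (hh : ContDiffAt ℝ 2 h (sqDiff a b)) :
    fderiv ℝ (objective h μ) (a, b) = 0 ↔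
      ∀ i, a i * (gradient h (sqDiff a b) i + μ) = 0 ∧
        b i * (μ - gradient h (sqDiff a b) i) = 0 := by
  classical
  constructor
  · intro h0 i
    constructor
    · simpa [h0, mul_eq_zero] using
        (fderiv_objective_apply (μ := μ) hh (EuclideanSpace.single i 1) 0).symm
    · simpa [h0, mul_eq_zero] using
        (fderiv_objective_apply (μ := μ) hh 0 (EuclideanSpace.single i 1)).symm
  · refine fun hfo => ContinuousLinearMap.ext fun ⟨u, v⟩ => ?_
    rw [fderiv_objective_apply hh, zero_apply]
    exact Finset.sum_eq_zero fun i _ =>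
      by linear_combination (2 * u i) * (hfo i).1 + (2 * v i) * (hfo i).2

theorem iteratedFDeriv_two_objective_apply (hh : ContDiffAt ℝ 2 h (sqDiff a b))
    (u v : EuclideanSpace ℝ ι) :
    iteratedFDeriv ℝ 2 (objective h μ) (a, b) (fun _ => (u, v)) =
      iteratedFDeriv ℝ 2 h (sqDiff a b) (fun _ => sqDiffDeriv a b u v) +
        ∑ i, (2 * (gradient h (sqDiff a b) i + μ) * u i ^ 2 +
          2 * (μ - gradient h (sqDiff a b) i) * v i ^ 2) := by
  have hcurve : ContDiffAt ℝ 2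
      (fun t : ℝ => h (sqDiff a b + t • sqDiffDeriv a b u v + t ^ 2 • sqDiff u v)) 0 :=
    (by simpa using hh : ContDiffAt ℝ 2 h _).comp 0 (contDiff_quadraticCurve _ _ _).contDiffAt
  simp_rw [(contDiffAt_objective hh).iteratedFDeriv_two_apply_eq_iteratedDeriv_line,
    objective_add_smul]
  rw [iteratedDeriv_fun_add hcurve (by fun_prop), iteratedDeriv_const_mul_field,
    iteratedDeriv_two_quadraticCurve, hh.iteratedDeriv_two_comp_quadraticCurve,
    EuclideanSpace.fderiv_apply_eq_sum_gradient]
  simp only [sqDiff_apply, smul_eq_mul, Finset.mul_sum, add_assoc, ← Finset.sum_add_distrib]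
  congr 1
  exact Finset.sum_congr rfl fun i _ => by ring

end Derivatives

section SecondOrder

variable {a b g : EuclideanSpace ℝ ι} {μ : ℝ} {Q : EuclideanSpace ℝ ι → ℝ}

theorem secondOrder_of_nonneg (hμ : 0 < μ)
    (hfo : ∀ i, a i * (g i + μ) = 0 ∧ b i * (μ - g i) = 0)
    (hbox : ∀ i, sqDiff a b i = 0 → g i ∈ Set.Icc (-μ) μ)
    (hQ : ∀ w, (∀ i, sqDiff a b i = 0 → w i = 0) → 0 ≤ Q w) (u v : EuclideanSpace ℝ ι) :
    0 ≤ Q (sqDiffDeriv a b u v) + ∑ i, (2 * (g i + μ) * u i ^ 2 + 2 * (μ - g i) * v i ^ 2) := by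
  refine add_nonneg (hQ _ fun i hs => ?_) (Finset.sum_nonneg fun i _ => ?_)
  · obtain ⟨ha, hb⟩ := eq_zero_and_eq_zero_of_stationary hμ.ne' (hfo i).1 (hfo i).2 hs
    simp [ha, hb]
  · obtain ⟨hlo, hhi⟩ : g i ∈ Set.Icc (-μ) μ := by
      by_cases hs : sqDiff a b i = 0
      · exact hbox i hs
      · exact mem_Icc_of_stationary hμ.le (hfo i).1 (hfo i).2 hs
    have : 0 ≤ g i + μ := by linarith
    have : 0 ≤ μ - g i := by linarith
    positivity

theorem mem_Icc_of_secondOrder (hμ : μ ≠ 0)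
    (hfo : ∀ i, a i * (g i + μ) = 0 ∧ b i * (μ - g i) = 0) (hQ0 : Q 0 = 0)
    (hso : ∀ u v : EuclideanSpace ℝ ι,
      0 ≤ Q (sqDiffDeriv a b u v) + ∑ i, (2 * (g i + μ) * u i ^ 2 + 2 * (μ - g i) * v i ^ 2))
    (i : ι) (hs : sqDiff a b i = 0) : g i ∈ Set.Icc (-μ) μ := by
  classical
  obtain ⟨ha, hb⟩ := eq_zero_and_eq_zero_of_stationary hμ (hfo i).1 (hfo i).2 hs
  have hjac : ∀ u v : EuclideanSpace ℝ ι, (∀ j, j ≠ i → u j = 0 ∧ v j = 0) →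
      sqDiffDeriv a b u v = 0 := by
    intro u v huv
    ext j
    rcases eq_or_ne j i with rfl | hj
    · simp [ha, hb]
    · simp [(huv j hj).1, (huv j hj).2]
  have hu : 0 ≤ 2 * (g i + μ) := by
    simpa [hjac (EuclideanSpace.single i 1) 0 fun j hj => by simp [hj], hQ0] using
      hso (EuclideanSpace.single i 1) 0
  have hv : 0 ≤ 2 * (μ - g i) := by
    simpa [hjac 0 (EuclideanSpace.single i 1) fun j hj => by simp [hj], hQ0] using
      hso 0 (EuclideanSpace.single i 1)
  constructor <;> linarith

theorem nonneg_of_secondOrder (hμ : μ ≠ 0)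
    (hfo : ∀ i, a i * (g i + μ) = 0 ∧ b i * (μ - g i) = 0)
    (hso : ∀ u v : EuclideanSpace ℝ ι,
      0 ≤ Q (sqDiffDeriv a b u v) + ∑ i, (2 * (g i + μ) * u i ^ 2 + 2 * (μ - g i) * v i ^ 2))
    (w : EuclideanSpace ℝ ι) (hw : ∀ i, sqDiff a b i = 0 → w i = 0) : 0 ≤ Q w := by
  -- `x / 0 = 0` makes `u` vanish where `a i = 0` and `v` where `b i = 0`, which kills the sum.
  set u : EuclideanSpace ℝ ι := WithLp.toLp 2 fun i => w i / (2 * a i)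
  set v : EuclideanSpace ℝ ι := WithLp.toLp 2 fun i => -(w i / (2 * b i))
  have hjac : sqDiffDeriv a b u v = w := by
    ext i
    rcases eq_zero_or_eq_zero_of_stationary hμ (hfo i).1 (hfo i).2 with ha | hb
    · rcases eq_or_ne (b i) 0 with hb | hb
      · simp [u, v, ha, hb, hw i (by simp [ha, hb])]
      · simp only [sqDiffDeriv_apply, ha, mul_zero, div_zero, mul_neg, sub_neg_eq_add, zero_add,
          u, v]
        field_simp
    · rcases eq_or_ne (a i) 0 with ha | ha
      · simp [u, v, ha, hb, hw i (by simp [ha, hb])]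
      · simp only [sqDiffDeriv_apply, hb, mul_zero, div_zero, neg_zero, sub_zero, u, v]
        field_simp
  have hsum : ∑ i, (2 * (g i + μ) * u i ^ 2 + 2 * (μ - g i) * v i ^ 2) = 0 := by
    refine Finset.sum_eq_zero fun i _ => ?_
    rcases mul_eq_zero.1 (hfo i).1 with ha | ha <;>
    rcases mul_eq_zero.1 (hfo i).2 with hb | hb <;>
    simp [u, v, ha, hb]
  simpa [hjac, hsum] using hso u v

theorem secondOrder_iff (hμ : 0 < μ) (hfo : ∀ i, a i * (g i + μ) = 0 ∧ b i * (μ - g i) = 0)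
    (hQ0 : Q 0 = 0) :
    (∀ u v : EuclideanSpace ℝ ι,
      0 ≤ Q (sqDiffDeriv a b u v) + ∑ i, (2 * (g i + μ) * u i ^ 2 + 2 * (μ - g i) * v i ^ 2)) ↔
      (∀ i, sqDiff a b i = 0 → g i ∈ Set.Icc (-μ) μ) ∧
        ∀ w : EuclideanSpace ℝ ι, (∀ i, sqDiff a b i = 0 → w i = 0) → 0 ≤ Q w :=
  ⟨fun hso => ⟨mem_Icc_of_secondOrder hμ.ne' hfo hQ0 hso, nonneg_of_secondOrder hμ.ne' hfo hso⟩,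
    fun ⟨hbox, hQ⟩ => secondOrder_of_nonneg hμ hfo hbox hQ⟩

end SecondOrder

end HDP

open HDP in
theorem stmt7 (n : ℕ)
    (h : EuclideanSpace ℝ (Fin n) → ℝ) (hh : ContDiff ℝ 2 h)
    (μ : ℝ) (hμ : 0 < μ)
    (F : EuclideanSpace ℝ (Fin n) × EuclideanSpace ℝ (Fin n) → ℝ)
    (hF : F = fun p =>
      h (WithLp.toLp 2 (fun i => p.1 i ^ 2 - p.2 i ^ 2)) + μ * ∑ i, (p.1 i ^ 2 + p.2 i ^ 2))
    (a b : EuclideanSpace ℝ (Fin n))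
    (s : EuclideanSpace ℝ (Fin n)) (hs : s = WithLp.toLp 2 (fun i => a i ^ 2 - b i ^ 2)) :
    ((∀ i : Fin n,
        (s i ≠ 0 → gradient h s i = -μ * Real.sign (s i)) ∧
        (s i = 0 → gradient h s i ∈ Set.Icc (-μ) μ)) ∧
      (∀ i : Fin n, min (a i ^ 2) (b i ^ 2) = 0) ∧
      (∀ w : EuclideanSpace ℝ (Fin n), (∀ i, s i = 0 → w i = 0) →
        0 ≤ iteratedFDeriv ℝ 2 h s (fun _ => w))) ↔
    (fderiv ℝ F (a, b) = 0 ∧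
      ∀ w : EuclideanSpace ℝ (Fin n) × EuclideanSpace ℝ (Fin n),
        0 ≤ iteratedFDeriv ℝ 2 F (a, b) (fun _ => w)) := by
  obtain rfl : F = objective h μ := hF
  obtain rfl : s = sqDiff a b := hs
  have hh' := hh.contDiffAt (x := sqDiff a b)
  have hsecond := fun hfo => secondOrder_iff (a := a) (b := b) (g := gradient h (sqDiff a b))
    (Q := fun w => iteratedFDeriv ℝ 2 h (sqDiff a b) fun _ => w) hμ hfo
    (ContinuousMultilinearMap.map_zero _)
  have hcoord := fun i => sign_condition_and_min_sq_eq_zero_iff (a := a i) (b := b i)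
    (g := gradient h (sqDiff a b) i) hμ.ne'
  simp_rw [fderiv_objective_eq_zero_iff hh', Prod.forall, iteratedFDeriv_two_objective_apply hh']
  constructor
  · rintro ⟨hstat, hmin, hpsd⟩
    have hfo := fun i => (hcoord i).1 ⟨(hstat i).1, hmin i⟩
    exact ⟨hfo, (hsecond hfo).2 ⟨fun i => (hstat i).2, hpsd⟩⟩
  · rintro ⟨hfo, hso⟩
    obtain ⟨hbox, hpsd⟩ := (hsecond hfo).1 hso
    exact ⟨fun i => ⟨((hcoord i).2 (hfo i)).1, hbox i⟩, fun i => ((hcoord i).2 (hfo i)).2, hpsd⟩
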